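/- arXiv:1305.1454 — 2 statements merged into one kernel-verified Lean document; each statement's English description precedes it below -/
import Mathlib

section
/- Let A, C, b, d be as in the constrained system A ⊗ x ⊕ b ≤ x, C ⊗ x ≤ d, with C column-regular and d regular. If Δ = Tr(A) ⊕ d⁻ ⊗ C ⊗ A* ⊗ b > 0, then the system has no regular solution. -/
noncomputable section

/-- Max-plus carrier: ℝ ∪ {-∞}. Addition ⊕ is `max`, multiplication ⊗ is `+`
(with ⊥ = -∞ absorbing), zero is ⊥ and unit is `(0 : ℝ)`. -/
abbrev MP := WithBot ℝ

/-- Multiplicative conjugate: negate a finite value, send -∞ to -∞. -/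
def mpInv (a : MP) : MP := a.map (fun t => -t)

/-- Max-plus matrix product. -/
def mpMulM {l m n : ℕ} (A : Fin l → Fin m → MP) (B : Fin m → Fin n → MP) :
    Fin l → Fin n → MP := fun i j => Finset.univ.sup fun k => A i k + B k j

/-- Max-plus matrix-vector product. -/
def mpMulV {m n : ℕ} (A : Fin m → Fin n → MP) (x : Fin n → MP) : Fin m → MP :=
  fun i => Finset.univ.sup fun j => A i j + x j

/-- Max-plus identity matrix. -/
def mpId {n : ℕ} : Fin n → Fin n → MP := fun i j => if i = j then ((0:ℝ) : MP) else ⊥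

/-- Max-plus matrix power. -/
def mpPow {n : ℕ} (A : Fin n → Fin n → MP) : ℕ → (Fin n → Fin n → MP)
  | 0 => mpId
  | k+1 => mpMulM (mpPow A k) A

/-- Max-plus trace. -/
def mpTr {n : ℕ} (A : Fin n → Fin n → MP) : MP := Finset.univ.sup fun i => A i i

/-- Tr(A) = tr A ⊕ tr A² ⊕ ⋯ ⊕ tr Aⁿ. -/
def mpTR {n : ℕ} (A : Fin n → Fin n → MP) : MP :=
  (Finset.Icc 1 n).sup fun m => mpTr (mpPow A m)

/-- Kleene star A* = I ⊕ A ⊕ ⋯ ⊕ A^{n-1}. -/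
def mpStar {n : ℕ} (A : Fin n → Fin n → MP) : Fin n → Fin n → MP :=
  fun i j => (Finset.range n).sup fun k => mpPow A k i j

/-- Max-plus spectral radius λ = max_{1≤m≤n} tr(A^m)^{1/m}. -/
def mpLam {n : ℕ} (A : Fin n → Fin n → MP) : MP :=
  (Finset.Icc 1 n).sup fun m => (mpTr (mpPow A m)).map (fun t => t / (m : ℝ))

/-- The alternating product B^{i₀} A B^{i₁} A ⋯ A B^{iₖ}. -/
def mpChain {n : ℕ} (A B : Fin n → Fin n → MP) : (k : ℕ) → (Fin (k+1) → ℕ) → (Fin n → Fin n → MP)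
  | 0, i => mpPow B (i 0)
  | (k+1), i => mpMulM (mpChain A B k (fun j => i j.castSucc)) (mpMulM A (mpPow B (i (Fin.last (k+1)))))

/-! A regular solution `x` satisfies `A x ≤ x`, hence `A^k x ≤ x` for all `k`: cancelling the finite
`x i` in `(A^k)ᵢᵢ + x i ≤ x i` shows that every cycle of `A` has weight `≤ 0`, i.e. `Tr(A) ≤ 0`.
Moreover `A* x ≤ x` and `b ≤ x` give `C A* b ≤ C A* x ≤ C x ≤ d`, i.e. `d⁻ C A* b ≤ 0`.
So `Δ ≤ 0`. -/

lemma WithBot.finset_sup_add {ι α : Type*} [Add α] [LinearOrder α] [AddRightMono α]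
    (s : Finset ι) (f : ι → WithBot α) (c : WithBot α) :
    s.sup f + c = s.sup fun i => f i + c := by
  induction s using Finset.cons_induction with
  | empty => simp
  | cons a s _ ih =>
    rw [Finset.sup_cons, Finset.sup_cons, ← ih]
    exact (monotone_id.add_const c).map_sup _ _

lemma WithBot.coe_neg_add_nonpos {r : ℝ} {t : WithBot ℝ} (h : t ≤ r) :
    ((-r : ℝ) : WithBot ℝ) + t ≤ ((0 : ℝ) : WithBot ℝ) := by
  induction t using WithBot.recBotCoe with
  | bot => simp
  | coe t =>
    norm_cast at h ⊢
    linarith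

section MaxPlus

variable {l m n : ℕ}

lemma le_mpMulV (P : Fin m → Fin n → MP) (y : Fin n → MP) (i : Fin m) (j : Fin n) :
    P i j + y j ≤ mpMulV P y i :=
  Finset.le_sup (f := fun j => P i j + y j) (Finset.mem_univ j)

lemma mpMulV_mono (P : Fin m → Fin n → MP) {y z : Fin n → MP} (h : y ≤ z) :
    mpMulV P y ≤ mpMulV P z := fun i =>
  Finset.sup_le fun j _ => (add_le_add_right (h j) _).trans (le_mpMulV P z i j)

lemma mpMulV_mpMulM_le (P : Fin l → Fin m → MP) (Q : Fin m → Fin n → MP) (y : Fin n → MP) :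
    mpMulV (mpMulM P Q) y ≤ mpMulV P (mpMulV Q y) := fun i => by
  refine Finset.sup_le fun j _ => ?_
  rw [mpMulM, WithBot.finset_sup_add]
  refine Finset.sup_le fun k _ => ?_
  rw [add_assoc]
  exact (add_le_add_right (le_mpMulV Q y k j) _).trans (le_mpMulV P _ i k)

lemma mpMulV_mpId (y : Fin n → MP) : mpMulV mpId y = y := by
  funext i
  refine le_antisymm (Finset.sup_le fun j _ => ?_) ?_
  · by_cases h : i = j
    · subst h; simp [mpId]
    · simp [mpId, h]
  · simpa [mpId] using le_mpMulV mpId y i i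

variable {A : Fin n → Fin n → MP} {y : Fin n → MP}

lemma mpMulV_mpPow_le (hy : mpMulV A y ≤ y) (k : ℕ) : mpMulV (mpPow A k) y ≤ y := by
  induction k with
  | zero => rw [mpPow, mpMulV_mpId]
  | succ k ih =>
    calc mpMulV (mpPow A (k + 1)) y ≤ mpMulV (mpPow A k) (mpMulV A y) :=
          mpMulV_mpMulM_le _ _ _
      _ ≤ mpMulV (mpPow A k) y := mpMulV_mono _ hy
      _ ≤ y := ih

lemma mpMulV_mpStar_le (hy : mpMulV A y ≤ y) : mpMulV (mpStar A) y ≤ y := fun i => by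
  refine Finset.sup_le fun j _ => ?_
  rw [mpStar, WithBot.finset_sup_add]
  exact Finset.sup_le fun k _ => (le_mpMulV _ y i j).trans (mpMulV_mpPow_le hy k i)

lemma mpTR_le_zero {x : Fin n → ℝ} (hx : mpMulV A (fun j => (x j : MP)) ≤ fun j => (x j : MP)) :
    mpTR A ≤ ((0 : ℝ) : MP) := by
  refine Finset.sup_le fun k _ => Finset.sup_le fun i _ => ?_
  have hcycle : mpPow A k i i + (x i : MP) ≤ ((0 : ℝ) + x i : ℝ) := by
    simpa using (le_mpMulV _ _ i i).trans (mpMulV_mpPow_le hx k i)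
  rwa [WithBot.coe_add, WithBot.add_le_add_iff_right WithBot.coe_ne_bot] at hcycle

lemma sup_coe_neg_add_mpMulM_mpStar_add_le_zero {C : Fin m → Fin n → MP} {b : Fin n → MP}
    {d : Fin m → ℝ}
    (hA : mpMulV A y ≤ y) (hb : b ≤ y) (hC : ∀ i, mpMulV C y i ≤ (d i : MP)) :
    (Finset.univ.sup fun j =>
      (Finset.univ.sup fun i => ((-(d i) : ℝ) : MP) + mpMulM C (mpStar A) i j) + b j)
      ≤ ((0 : ℝ) : MP) := by
  refine Finset.sup_le fun j _ => ?_
  rw [WithBot.finset_sup_add]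
  refine Finset.sup_le fun i _ => ?_
  rw [add_assoc]
  refine WithBot.coe_neg_add_nonpos ?_
  calc mpMulM C (mpStar A) i j + b j
      ≤ mpMulV (mpMulM C (mpStar A)) y i := (add_le_add_right (hb j) _).trans (le_mpMulV _ y i j)
    _ ≤ mpMulV C (mpMulV (mpStar A) y) i := mpMulV_mpMulM_le _ _ _ i
    _ ≤ mpMulV C y i := mpMulV_mono C (mpMulV_mpStar_le hA) i
    _ ≤ d i := hC i

end MaxPlus

theorem maxplus_system_no_solution_general {m n : ℕ} (A : Fin n → Fin n → MP)
    (C : Fin m → Fin n → MP)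
    (b : Fin n → MP) (d : Fin m → ℝ)
    (hΔ : ((0:ℝ) : MP) < max (mpTR A)
        (Finset.univ.sup fun j =>
          (Finset.univ.sup fun i => ((-(d i) : ℝ) : MP) + mpMulM C (mpStar A) i j) + b j)) :
    ¬ ∃ x : Fin n → ℝ,
        (∀ i, max (mpMulV A (fun j => (x j : MP)) i) (b i) ≤ (x i : MP)) ∧
        (∀ i, mpMulV C (fun j => (x j : MP)) i ≤ (d i : MP)) := by
  rintro ⟨x, hAb, hC⟩
  have hA : mpMulV A (fun j => (x j : MP)) ≤ fun j => (x j : MP) :=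
    fun i => (le_max_left _ _).trans (hAb i)
  have hb : b ≤ fun j => (x j : MP) := fun i => (le_max_right _ _).trans (hAb i)
  exact hΔ.not_ge <| max_le (mpTR_le_zero hA)
    (sup_coe_neg_add_mpMulM_mpStar_add_le_zero hA hb hC)

/-- If Δ = Tr(A) ⊕ d⁻ C A* b > 𝟙 then the system has no regular solution. -/
theorem maxplus_system_no_solution {m n : ℕ} (A : Fin n → Fin n → MP)
    (C : Fin m → Fin n → MP) (hC : ∀ j, ∃ i, C i j ≠ ⊥)
    (b : Fin n → MP) (d : Fin m → ℝ)
    (hΔ : ((0:ℝ) : MP) < max (mpTR A)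
        (Finset.univ.sup fun j =>
          (Finset.univ.sup fun i => ((-(d i) : ℝ) : MP) + mpMulM C (mpStar A) i j) + b j)) :
    ¬ ∃ x : Fin n → ℝ,
        (∀ i, max (mpMulV A (fun j => (x j : MP)) i) (b i) ≤ (x i : MP)) ∧
        (∀ i, mpMulV C (fun j => (x j : MP)) i ≤ (d i : MP)) :=
  maxplus_system_no_solution_general A C b d hΔ
end
end

section
/- Suppose Tr(A) ⊕ d⁻ ⊗ C ⊗ A* ⊗ b ≤ 0 for an n×n max-plus matrix A, column-regular C, vector b, and regular d. Then Tr(A) ⊕ d⁻ ⊗ C ⊗ A* ⊗ b = d⁻ ⊗ C ⊗ b ⊕ max_{1≤m≤n} tr( A^m ⊗ (I ⊕ b ⊗ d⁻ ⊗ C) ). -/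
noncomputable section

/-!
Write `r = d⁻ ⊗ C` and `S k = r ⊗ Aᵏ ⊗ b`. Since `tr (Aᵏ ⊗ (I ⊕ b ⊗ r)) = tr Aᵏ ⊕ S k`, the
right-hand side expands to `Tr(A) ⊕ S 0 ⊕ ⋯ ⊕ S n`, while the left-hand side is
`Tr(A) ⊕ S 0 ⊕ ⋯ ⊕ S (n - 1)`. The extra term `S n` is absorbed because `Aⁿ ≤ A*` when
`Tr(A) ≤ 0`: a walk of length at least `n` repeats a vertex, and cutting out the resulting cycle,
of some length `c ≤ n` and weight at most `tr Aᶜ ≤ 0`, does not decrease its weight.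
-/

open Finset

lemma Finset.sup_max {α ι : Type*} [LinearOrder α] [OrderBot α] (s : Finset ι) (f g : ι → α) :
    (s.sup fun i => max (f i) (g i)) = max (s.sup f) (s.sup g) :=
  sup_sup

namespace WithBot

variable {α ι : Type*} [AddCommMonoid α] [LinearOrder α] [IsOrderedAddMonoid α]

lemma finset_sup_add_s14 (s : Finset ι) (f : ι → WithBot α) (a : WithBot α) :
    s.sup f + a = s.sup fun i => f i + a := by
  induction s using Finset.cons_induction with
  | empty => simp
  | cons i s hi ih => rw [sup_cons, sup_cons, ← ih, max_add_add_right]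

lemma add_finset_sup (s : Finset ι) (f : ι → WithBot α) (a : WithBot α) :
    a + s.sup f = s.sup fun i => a + f i := by
  simp only [add_comm a, finset_sup_add_s14]

end WithBot

open WithBot

lemma sup_mpId_add {n : ℕ} (p : Fin n) (x : Fin n → MP) :
    (univ.sup fun q => mpId p q + x q) = x p := by
  refine le_antisymm (Finset.sup_le fun q _ => ?_) (le_sup_of_le (mem_univ p) (by simp [mpId]))
  by_cases hpq : p = q
  · subst hpq; simp [mpId]
  · simp [mpId, hpq]

lemma sup_add_mpId {n : ℕ} (p : Fin n) (x : Fin n → MP) :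
    (univ.sup fun q => x q + mpId q p) = x p := by
  refine le_antisymm (Finset.sup_le fun q _ => ?_) (le_sup_of_le (mem_univ p) (by simp [mpId]))
  by_cases hpq : q = p
  · subst hpq; simp [mpId]
  · simp [mpId, hpq]

section Walks

variable {n : ℕ} (A : Fin n → Fin n → MP)

lemma add_le_mpPow_succ (l : ℕ) (p k q : Fin n) :
    mpPow A l p k + A k q ≤ mpPow A (l + 1) p q :=
  le_sup (f := fun k => mpPow A l p k + A k q) (mem_univ k)

lemma mpPow_add_le (a : ℕ) (p v : Fin n) : ∀ (b : ℕ) (q : Fin n),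
    mpPow A a p v + mpPow A b v q ≤ mpPow A (a + b) p q
  | 0, q => by
    by_cases hvq : v = q
    · subst hvq; simp [mpPow, mpId]
    · simp [mpPow, mpId, hvq]
  | b + 1, q => by
    change mpPow A a p v + univ.sup (fun k => mpPow A b v k + A k q) ≤ _
    rw [add_finset_sup]
    refine Finset.sup_le fun k _ => ?_
    rw [← add_assoc]
    exact (add_le_add_left (mpPow_add_le a p v b k) _).trans (add_le_mpPow_succ A _ _ k q)

def walkWeight (g : ℕ → Fin n) (a l : ℕ) : MP :=
  ∑ u ∈ Ico a (a + l), A (g u) (g (u + 1))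

lemma walkWeight_add (g : ℕ → Fin n) (a l₁ l₂ : ℕ) :
    walkWeight A g a (l₁ + l₂) = walkWeight A g a l₁ + walkWeight A g (a + l₁) l₂ := by
  unfold walkWeight
  rw [sum_Ico_consecutive _ (by omega) (by omega), add_assoc]

lemma walkWeight_one (g : ℕ → Fin n) (a : ℕ) : walkWeight A g a 1 = A (g a) (g (a + 1)) := by
  simp [walkWeight]

lemma walkWeight_le_mpPow (g : ℕ → Fin n) (a : ℕ) :
    ∀ {l b : ℕ}, a + l = b → walkWeight A g a l ≤ mpPow A l (g a) (g b)
  | 0, _, rfl => by simp [walkWeight, mpPow, mpId]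
  | l + 1, _, rfl => by
    rw [walkWeight_add, walkWeight_one]
    exact (add_le_add_left (walkWeight_le_mpPow g a rfl) _).trans (add_le_mpPow_succ A l _ _ _)

lemma exists_walkWeight_eq_mpPow : ∀ (l : ℕ) (p q : Fin n), mpPow A l p q ≠ ⊥ →
    ∃ g : ℕ → Fin n, g 0 = p ∧ g l = q ∧ walkWeight A g 0 l = mpPow A l p q
  | 0, p, q, hpq => by
    obtain rfl : p = q := by
      by_contra hne
      exact hpq (by simp [mpPow, mpId, hne])
    exact ⟨fun _ => p, rfl, rfl, by simp [walkWeight, mpPow, mpId]⟩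
  | l + 1, p, q, hpq => by
    obtain ⟨k, -, hk⟩ := exists_mem_eq_sup univ ⟨p, mem_univ p⟩ fun k => mpPow A l p k + A k q
    change mpPow A (l + 1) p q = _ at hk
    obtain ⟨g, hg0, hgl, hg⟩ := exists_walkWeight_eq_mpPow l p k fun h => hpq (by simp [hk, h])
    refine ⟨fun u => if u ≤ l then g u else q, by simp [hg0], by simp, ?_⟩
    have hprefix : walkWeight A (fun u => if u ≤ l then g u else q) 0 l = walkWeight A g 0 l :=
      sum_congr rfl fun u hu => by
        rw [mem_Ico] at hu
        simp only [if_pos (show u ≤ l by omega), if_pos (show u + 1 ≤ l by omega)]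
    rw [walkWeight_add, walkWeight_one, hprefix, hg, hk]
    simp [hgl]

end Walks

lemma exists_lt_le_apply_eq {n : ℕ} (g : ℕ → Fin n) : ∃ s t, s < t ∧ t ≤ n ∧ g s = g t := by
  obtain ⟨u, v, huv, hguv⟩ :=
    Fintype.exists_ne_map_eq_of_card_lt (fun u : Fin (n + 1) => g u) (by simp)
  rcases huv.lt_or_gt with h | h
  · exact ⟨u, v, h, Nat.lt_succ_iff.mp v.isLt, hguv⟩
  · exact ⟨v, u, h, Nat.lt_succ_iff.mp u.isLt, hguv.symm⟩

section Carre

variable {n : ℕ} (A : Fin n → Fin n → MP)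

lemma mpPow_apply_self_le_mpTR {k : ℕ} (hk₁ : 1 ≤ k) (hkn : k ≤ n) (v : Fin n) :
    mpPow A k v v ≤ mpTR A :=
  le_sup_of_le (mem_Icc.2 ⟨hk₁, hkn⟩) (le_sup (f := fun i => mpPow A k i i) (mem_univ v))

lemma exists_lt_mpPow_le (hA : mpTR A ≤ ((0 : ℝ) : MP)) {k : ℕ} (hk : n ≤ k) (p q : Fin n) :
    ∃ j < k, mpPow A k p q ≤ mpPow A j p q := by
  have hn : 0 < n := p.pos
  by_cases hbot : mpPow A k p q = ⊥
  · exact ⟨0, by omega, hbot ▸ bot_le⟩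
  obtain ⟨g, rfl, rfl, hg⟩ := exists_walkWeight_eq_mpPow A k p q hbot
  obtain ⟨s, t, hst, htn, hgst⟩ := exists_lt_le_apply_eq g
  have hcycle : walkWeight A g s (t - s) ≤ 0 :=
    calc walkWeight A g s (t - s) ≤ mpPow A (t - s) (g s) (g s) :=
        by simpa only [hgst] using walkWeight_le_mpPow A g s (show s + (t - s) = t by omega)
      _ ≤ mpTR A := mpPow_apply_self_le_mpTR A (by omega) (by omega) _
      _ ≤ 0 := hA
  have hsplit : walkWeight A g 0 k =
      walkWeight A g 0 s + walkWeight A g s (t - s) + walkWeight A g t (k - t) := by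
    conv_lhs => rw [show k = s + (t - s) + (k - t) by omega]
    rw [walkWeight_add, walkWeight_add, zero_add, zero_add, show s + (t - s) = t by omega]
  refine ⟨s + (k - t), by omega, ?_⟩
  calc mpPow A k (g 0) (g k)
      = walkWeight A g 0 s + walkWeight A g s (t - s) + walkWeight A g t (k - t) := by
        rw [← hg, hsplit]
    _ ≤ mpPow A s (g 0) (g s) + 0 + mpPow A (k - t) (g t) (g k) := by
        gcongr
        · exact walkWeight_le_mpPow A g 0 (zero_add s)
        · exact walkWeight_le_mpPow A g t (show t + (k - t) = k by omega)
    _ = mpPow A s (g 0) (g s) + mpPow A (k - t) (g s) (g k) := by rw [add_zero, hgst]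
    _ ≤ mpPow A (s + (k - t)) (g 0) (g k) := mpPow_add_le A s _ _ _ _

lemma mpPow_le_mpStar (hA : mpTR A ≤ ((0 : ℝ) : MP)) (k : ℕ) (p q : Fin n) :
    mpPow A k p q ≤ mpStar A p q := by
  induction k using Nat.strong_induction_on with
  | _ k ih =>
    rcases lt_or_ge k n with hk | hk
    · exact le_sup (f := fun j => mpPow A j p q) (mem_range.2 hk)
    · obtain ⟨j, hjk, hj⟩ := exists_lt_mpPow_le A hA hk p q
      exact hj.trans (ih j hjk)

end Carre

section Forms

variable {m n : ℕ}

def mpRowMul (y : Fin m → MP) (C : Fin m → Fin n → MP) : Fin n → MP :=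
  fun q => univ.sup fun i => y i + C i q

/-- The scalar `r ⊗ M ⊗ x`. -/
def mpForm (r : Fin n → MP) (M : Fin n → Fin n → MP) (x : Fin n → MP) : MP :=
  univ.sup fun p => univ.sup fun q => r p + M p q + x q

lemma sup_mpRowMul_mpMulM_add (y : Fin m → MP) (C : Fin m → Fin n → MP)
    (M : Fin n → Fin n → MP) (x : Fin n → MP) :
    (univ.sup fun j => mpRowMul y (mpMulM C M) j + x j) = mpForm (mpRowMul y C) M x := by
  simp only [mpRowMul, mpMulM, mpForm, finset_sup_add_s14, add_finset_sup, add_assoc]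
  conv_lhs => arg 2; ext j; rw [Finset.sup_comm]
  rw [Finset.sup_comm]

lemma mpForm_sup {ι : Type*} (r : Fin n → MP) (s : Finset ι) (M : ι → Fin n → Fin n → MP)
    (x : Fin n → MP) :
    mpForm r (fun p q => s.sup fun k => M k p q) x = s.sup fun k => mpForm r (M k) x := by
  simp only [mpForm, finset_sup_add_s14, add_finset_sup]
  conv_lhs => arg 2; ext p; rw [Finset.sup_comm]
  rw [Finset.sup_comm]

lemma mpForm_mono (r : Fin n → MP) {M M' : Fin n → Fin n → MP} (h : ∀ p q, M p q ≤ M' p q)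
    (x : Fin n → MP) : mpForm r M x ≤ mpForm r M' x := by
  unfold mpForm
  gcongr with p _ q _
  exact h p q

lemma mpForm_mpPow_zero (r : Fin n → MP) (A : Fin n → Fin n → MP) (x : Fin n → MP) :
    mpForm r (mpPow A 0) x = univ.sup fun j => r j + x j := by
  refine sup_congr rfl fun p _ => ?_
  simp only [add_assoc, ← add_finset_sup]
  rw [mpPow, sup_mpId_add]

lemma mpTr_mpMulM_mpId_max (M : Fin n → Fin n → MP) (r x : Fin n → MP) :
    mpTr (mpMulM M fun p q => max (mpId p q) (x p + r q)) = max (mpTr M) (mpForm r M x) := by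
  simp only [mpTr, mpMulM, ← max_add_add_left]
  have hrow : ∀ p, (univ.sup fun k => max (M p k + mpId k p) (M p k + (x k + r p))) =
      max (M p p) (univ.sup fun q => r p + M p q + x q) := fun p => by
    rw [← sup_add_mpId p (M p), Finset.sup_max]
    congr 1
    exact sup_congr rfl fun q _ => by ac_rfl
  rw [sup_congr rfl fun p _ => hrow p, Finset.sup_max]
  rfl

end Forms

theorem maxplus_Delta_representation_general {m n : ℕ} (A : Fin n → Fin n → MP)
    (C : Fin m → Fin n → MP)
    (b : Fin n → MP) (d : Fin m → ℝ)
    (h : max (mpTR A)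
        (Finset.univ.sup fun j =>
          (Finset.univ.sup fun i => ((-(d i) : ℝ) : MP) + mpMulM C (mpStar A) i j) + b j)
      ≤ ((0:ℝ) : MP)) :
    max (mpTR A)
        (Finset.univ.sup fun j =>
          (Finset.univ.sup fun i => ((-(d i) : ℝ) : MP) + mpMulM C (mpStar A) i j) + b j)
      =
    max (Finset.univ.sup fun j =>
          (Finset.univ.sup fun i => ((-(d i) : ℝ) : MP) + C i j) + b j)
        ((Finset.Icc 1 n).sup fun k =>
          mpTr (mpMulM (mpPow A k)
            (fun p q => max (mpId p q)
              (b p + (Finset.univ.sup fun i => ((-(d i) : ℝ) : MP) + C i q))))) := by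
  set y : Fin m → MP := fun i => ((-(d i) : ℝ) : MP)
  change max (mpTR A) (univ.sup fun j => mpRowMul y (mpMulM C (mpStar A)) j + b j) =
    max (univ.sup fun j => mpRowMul y C j + b j)
      ((Icc 1 n).sup fun k =>
        mpTr (mpMulM (mpPow A k) fun p q => max (mpId p q) (b p + mpRowMul y C q)))
  set S := fun k => mpForm (mpRowMul y C) (mpPow A k) b
  have hstar : mpForm (mpRowMul y C) (mpStar A) b = (range n).sup S :=
    mpForm_sup _ (range n) (mpPow A) b
  have hSn : S n ≤ (range n).sup S :=
    hstar ▸ mpForm_mono _ (mpPow_le_mpStar A (le_of_max_le_left h) n) b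
  have hrange : range (n + 1) = insert 0 (Icc 1 n) := by ext k; simp; omega
  rw [sup_mpRowMul_mpMulM_add, hstar, ← mpForm_mpPow_zero _ A b]
  simp only [mpTr_mpMulM_mpId_max]
  calc max (mpTR A) ((range n).sup S)
      = max (mpTR A) ((range (n + 1)).sup S) := by rw [range_add_one, sup_insert, max_eq_right hSn]
    _ = max (S 0) (max (mpTR A) ((Icc 1 n).sup S)) := by
        rw [hrange, sup_insert, max_left_comm]
    _ = _ := by rw [Finset.sup_max, mpTR]

/-- Alternative representation of Δ = Tr(A) ⊕ d⁻ C A* b when Δ ≤ 𝟙. -/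
theorem maxplus_Delta_representation {m n : ℕ} (A : Fin n → Fin n → MP)
    (C : Fin m → Fin n → MP) (hC : ∀ j, ∃ i, C i j ≠ ⊥)
    (b : Fin n → MP) (d : Fin m → ℝ)
    (h : max (mpTR A)
        (Finset.univ.sup fun j =>
          (Finset.univ.sup fun i => ((-(d i) : ℝ) : MP) + mpMulM C (mpStar A) i j) + b j)
      ≤ ((0:ℝ) : MP)) :
    max (mpTR A)
        (Finset.univ.sup fun j =>
          (Finset.univ.sup fun i => ((-(d i) : ℝ) : MP) + mpMulM C (mpStar A) i j) + b j)
      =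
    max (Finset.univ.sup fun j =>
          (Finset.univ.sup fun i => ((-(d i) : ℝ) : MP) + C i j) + b j)
        ((Finset.Icc 1 n).sup fun k =>
          mpTr (mpMulM (mpPow A k)
            (fun p q => max (mpId p q)
              (b p + (Finset.univ.sup fun i => ((-(d i) : ℝ) : MP) + C i q))))) :=
  maxplus_Delta_representation_general A C b d h
end
end
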